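/- arXiv:2508.21348 — 4 statements merged into one kernel-verified Lean document; each statement's English description precedes it below -/
import Mathlib

section
/- A linear map Φ : ℂ^{m×m} → ℂ^{d×d} is k-positive if and only if ⟨ψ| C(Φ) |ψ⟩ ≥ 0 for all vectors ψ ∈ ℂ^m ⊗ ℂ^d of Schmidt rank at most k, where C(Φ) = Σ_{i,j} |i⟩⟨j| ⊗ Φ(|i⟩⟨j|) is the Choi matrix of Φ. -/
open scoped ComplexOrder

/-- The map `id_k ⊗ Φ` acting on block matrices: for `A ∈ ℂ^{km×km}` viewed as a `k×k` matrix of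
`m×m` blocks, apply `Φ` to each block. -/
noncomputable def idTensor {k m d : Type*} [Fintype k] [Fintype m] [Fintype d]
    (Φ : Matrix m m ℂ → Matrix d d ℂ) (A : Matrix (k × m) (k × m) ℂ) :
    Matrix (k × d) (k × d) ℂ :=
  Matrix.of fun p q => Φ (Matrix.of fun s t => A (p.1, s) (q.1, t)) p.2 q.2

/-- The Choi matrix `C(Φ) = ∑_{i,j} |i⟩⟨j| ⊗ Φ(|i⟩⟨j|)` of a map
`Φ : ℂ^{m×m} → ℂ^{d×d}`. -/
noncomputable def choiMatrix {m d : Type*} [Fintype m] [Fintype d] [DecidableEq m]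
    (Φ : Matrix m m ℂ → Matrix d d ℂ) : Matrix (m × d) (m × d) ℂ :=
  Matrix.of fun p q => Φ (Matrix.single p.1 q.1 1) p.2 q.2

/-! The Choi matrix linearizes `id_k ⊗ Φ` on rank-one inputs: if `v = vec V` with
`V ∈ ℂ^{k×m}` and `W = V† ⊗ 1`, then `(id_k ⊗ Φ)(|v⟩⟨v|) = W† C(Φ) W`, and `W` sends `vec Z` to
`vec (V† Z)`. So `⟨z|(id_k ⊗ Φ)(|v⟩⟨v|)|z⟩ = ⟨ψ|C(Φ)|ψ⟩` for `ψ = vec (V† Z)`, which has Schmidt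
rank at most `k`, and by rank factorization every such `ψ` arises this way. Positive semidefinite
matrices are sums of rank-one `|v⟩⟨v|`, and over `ℂ` a nonnegative quadratic form forces
hermiticity, so both directions follow. -/

open scoped Kronecker
open Matrix

theorem Matrix.posSemidef_of_forall_dotProduct_mulVec_nonneg {n : Type*} [Fintype n]
    [DecidableEq n] {M : Matrix n n ℂ} (hM : ∀ x, 0 ≤ star x ⬝ᵥ (M *ᵥ x)) : M.PosSemidef := by
  rw [← isPositive_toEuclideanLin_iff, LinearMap.isPositive_iff_complex]
  intro x
  have hx : (inner ℂ (M.toEuclideanLin x) x : ℂ) = star x.ofLp ⬝ᵥ (M *ᵥ x.ofLp) := by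
    rw [EuclideanSpace.inner_eq_star_dotProduct, ofLp_toLpLin, toLin'_apply, dotProduct_star,
      dotProduct_comm, IsSelfAdjoint.of_nonneg (hM _)]
  rw [hx]
  exact ⟨Complex.conj_eq_iff_re.mp (IsSelfAdjoint.of_nonneg (hM _)),
    (Complex.nonneg_iff.mp (hM _)).1⟩

theorem Submodule.exists_fin_le_span_of_finrank_le {K V : Type*} [DivisionRing K]
    [AddCommGroup V] [Module K V] (W : Submodule K V) [FiniteDimensional K W] {k : ℕ}
    (hk : Module.finrank K W ≤ k) : ∃ v : Fin k → V, W ≤ span K (Set.range v) := by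
  let b := Module.finBasis K W
  refine ⟨fun s => if h : (s : ℕ) < Module.finrank K W then b ⟨s, h⟩ else 0, ?_⟩
  calc W = (⊤ : Submodule K W).map W.subtype := (Submodule.map_subtype_top W).symm
    _ = span K (Set.range (W.subtype ∘ b)) := by
      rw [← b.span_eq, Submodule.map_span, Set.range_comp]
    _ ≤ _ := span_mono (by rintro _ ⟨j, rfl⟩; exact ⟨Fin.castLE hk j, by simp⟩)

theorem Matrix.exists_eq_mul_of_rank_le {K m n : Type*} [Field K] [Fintype n] {k : ℕ}
    (X : Matrix m n K) (hX : X.rank ≤ k) :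
    ∃ (P : Matrix m (Fin k) K) (Q : Matrix (Fin k) n K), X = P * Q := by
  classical
  obtain ⟨v, hv⟩ := (LinearMap.range X.mulVecLin).exists_fin_le_span_of_finrank_le hX
  have hcol : ∀ a, X.col a ∈ Submodule.span K (Set.range v) := fun a =>
    hv ⟨Pi.single a 1, by simp⟩
  choose c hc using fun a => (Submodule.mem_span_range_iff_exists_fun K).1 (hcol a)
  refine ⟨of fun i s => v s i, of fun s a => c a s, ?_⟩
  ext i a
  calc X i a = (∑ s, c a s • v s) i := by rw [hc a]; rfl
    _ = _ := by simp [mul_apply, Finset.sum_apply, mul_comm]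

theorem Matrix.star_dotProduct_conjTranspose_mul_mul_mulVec {R m n : Type*} [NonUnitalSemiring R]
    [StarRing R] [Fintype m] [Fintype n] (A : Matrix m m R) (B : Matrix m n R) (x : n → R) :
    star x ⬝ᵥ (Bᴴ * A * B) *ᵥ x = star (B *ᵥ x) ⬝ᵥ A *ᵥ (B *ᵥ x) := by
  simp only [star_mulVec, dotProduct_mulVec, vecMul_vecMul, ← mulVec_mulVec]

theorem Matrix.kronecker_one_mulVec {R k m d : Type*} [CommSemiring R] [Fintype m] [Fintype d]
    [DecidableEq d] (A : Matrix k m R) (Z : Matrix m d R) :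
    (A ⊗ₖ (1 : Matrix d d R)) *ᵥ (fun p => Z p.1 p.2) = fun p => (A * Z) p.1 p.2 := by
  have := kronecker_mulVec_vec (1 : Matrix d d R) Zᵀ A
  rwa [Matrix.one_mul, ← transpose_mul] at this

section idTensor

variable {k m d : Type*} [Fintype k] [Fintype m] [Fintype d]

theorem idTensor_sum {ι : Type*} (Φ : Matrix m m ℂ →ₗ[ℂ] Matrix d d ℂ) (s : Finset ι)
    (A : ι → Matrix (k × m) (k × m) ℂ) :
    idTensor Φ (∑ i ∈ s, A i) = ∑ i ∈ s, idTensor Φ (A i) := by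
  ext p q
  have hblock : (of fun x y => (∑ i ∈ s, A i) (p.1, x) (q.1, y)) =
      ∑ i ∈ s, of fun x y => A i (p.1, x) (q.1, y) := by
    ext; simp [Matrix.sum_apply]
  rw [Matrix.sum_apply]
  simp only [idTensor, of_apply]
  rw [hblock, map_sum, Matrix.sum_apply]

variable [DecidableEq m]

theorem apply_eq_sum_mul_choiMatrix (Φ : Matrix m m ℂ →ₗ[ℂ] Matrix d d ℂ) (B : Matrix m m ℂ)
    (a b : d) : Φ B a b = ∑ i, ∑ j, B i j * choiMatrix Φ (i, a) (j, b) := by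
  have hB : B = ∑ i, ∑ j, B i j • single i j (1 : ℂ) := by
    conv_lhs => rw [matrix_eq_sum_single B]
    simp only [smul_single, smul_eq_mul, mul_one]
  conv_lhs => rw [hB]
  simp only [map_sum, map_smul, Matrix.sum_apply, Matrix.smul_apply, smul_eq_mul, choiMatrix,
    of_apply]

variable [DecidableEq d]

theorem idTensor_vecMulVec (Φ : Matrix m m ℂ →ₗ[ℂ] Matrix d d ℂ) (V : Matrix k m ℂ) :
    idTensor Φ (vecMulVec (fun p => V p.1 p.2) (star fun p => V p.1 p.2)) =
      -- without the second ascription the outer product elaborates through `CStarMatrix`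
      (Vᴴ ⊗ₖ (1 : Matrix d d ℂ))ᴴ * choiMatrix Φ * (Vᴴ ⊗ₖ (1 : Matrix d d ℂ)) := by
  ext ⟨s, a⟩ ⟨t, b⟩
  rw [idTensor, of_apply, apply_eq_sum_mul_choiMatrix]
  simp only [vecMulVec_apply, Pi.star_apply, RCLike.star_def, of_apply, Matrix.mul_apply,
    conjTranspose_apply, kroneckerMap_apply, one_apply, mul_ite, mul_one, mul_zero,
    apply_ite (starRingEnd ℂ), RingHomCompTriple.comp_apply, RingHom.id_apply, map_zero, ite_mul,
    zero_mul, Fintype.sum_prod_type, Finset.sum_ite_eq', Finset.mem_univ, ↓reduceIte,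
    Finset.sum_mul]
  rw [Finset.sum_comm]
  refine Finset.sum_congr rfl fun i _ => Finset.sum_congr rfl fun j _ => by ring

theorem star_dotProduct_idTensor_vecMulVec_mulVec (Φ : Matrix m m ℂ →ₗ[ℂ] Matrix d d ℂ)
    (V : Matrix k m ℂ) (Z : Matrix k d ℂ) :
    star (fun p => Z p.1 p.2) ⬝ᵥ
        idTensor Φ (vecMulVec (fun p => V p.1 p.2) (star fun p => V p.1 p.2)) *ᵥ
          (fun p => Z p.1 p.2) =
      star (fun p => (Vᴴ * Z) p.1 p.2) ⬝ᵥ choiMatrix Φ *ᵥ (fun p => (Vᴴ * Z) p.1 p.2) := by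
  rw [idTensor_vecMulVec, star_dotProduct_conjTranspose_mul_mul_mulVec, kronecker_one_mulVec]

end idTensor

/-- A linear map `Φ : ℂ^{m×m} → ℂ^{d×d}` is `k`-positive (i.e. `id_k ⊗ Φ` maps positive
semi-definite matrices to positive semi-definite matrices) if and only if
`⟨ψ| C(Φ) |ψ⟩ ≥ 0` for all `ψ ∈ ℂ^m ⊗ ℂ^d` of Schmidt rank at most `k`, i.e. for all
`ψ = vec X` with `X ∈ ℂ^{m×d}` of rank at most `k`. -/
theorem kPositive_iff_choi_schmidt (m d k : ℕ)
    (Φ : Matrix (Fin m) (Fin m) ℂ →ₗ[ℂ] Matrix (Fin d) (Fin d) ℂ) :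
    (∀ A : Matrix (Fin k × Fin m) (Fin k × Fin m) ℂ,
      A.PosSemidef → (idTensor (k := Fin k) (⇑Φ) A).PosSemidef) ↔
    (∀ X : Matrix (Fin m) (Fin d) ℂ, X.rank ≤ k →
      0 ≤ dotProduct (star fun p : Fin m × Fin d => X p.1 p.2)
        ((choiMatrix (⇑Φ)).mulVec fun p : Fin m × Fin d => X p.1 p.2)) := by
  constructor
  · intro hΦ X hX
    obtain ⟨P, Z, rfl⟩ := X.exists_eq_mul_of_rank_le hX
    have h := (hΦ _ (posSemidef_vecMulVec_self_star fun p => Pᴴ p.1 p.2)).dotProduct_mulVec_nonneg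
      fun p => Z p.1 p.2
    rwa [star_dotProduct_idTensor_vecMulVec_mulVec, conjTranspose_conjTranspose] at h
  · intro hC A hA
    obtain ⟨r, v, rfl⟩ := posSemidef_iff_eq_sum_vecMulVec.mp hA
    refine posSemidef_of_forall_dotProduct_mulVec_nonneg fun z => ?_
    rw [idTensor_sum, sum_mulVec, dotProduct_sum]
    refine Finset.sum_nonneg fun i _ => ?_
    let V : Matrix (Fin k) (Fin m) ℂ := of fun s j => v i (s, j)
    let Z : Matrix (Fin k) (Fin d) ℂ := of fun s a => z (s, a)
    have h := hC (Vᴴ * Z) ((rank_mul_le_right _ _).trans (rank_le_height Z))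
    rwa [← star_dotProduct_idTensor_vecMulVec_mulVec] at h
end

section
/- Let S be a closed convex cone of linear maps on ℂ^{d×d} which contains all completely positive maps, contains the identity map, and is closed under composition. Then for every Φ ∈ S, every K ∈ ℂ^{d×d}, and every t ≥ 0, the map exp(t·L) belongs to S, where L(X) = K X + X K† + Φ(X). -/
open scoped Matrix ComplexOrder

attribute [local instance] Matrix.frobeniusSeminormedAddCommGroup
  Matrix.frobeniusNormedAddCommGroup Matrix.frobeniusNormedSpace

/-- A map `Φ : ℂ^{m×m} → ℂ^{d×d}` is completely positive if `id_n ⊗ Φ` preserves positive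
semi-definiteness for every `n`. -/
def IsCompletelyPositive {m d : Type*} [Fintype m] [Fintype d]
    (Φ : Matrix m m ℂ → Matrix d d ℂ) : Prop :=
  ∀ (n : ℕ) (A : Matrix (Fin n × m) (Fin n × m) ℂ),
    A.PosSemidef → (idTensor (k := Fin n) Φ A).PosSemidef

/-!
Write `L = ℓ + r + Φ` with `ℓ X = K X` and `r X = X Kᴴ`. For real `s ≥ 0`, `(1 + s ℓ)(1 + s r)`
is the completely positive map `X ↦ (1 + s K) X (1 + s K)ᴴ` and `1 + s Φ` lies in the cone, so
`F n = (1 + (t/n) ℓ)(1 + (t/n) r)(1 + (t/n) Φ) ∈ S`, and `n (F n - 1) → t L`. Every sequence with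
this property has `F n ^ n → exp (t L)`: the bound `‖a ^ n - b ^ n‖ ≤ n ‖a - b‖ C ^ (n - 1)` with
`C = 1 + O(1 / n)` compares `F n ^ n` with `exp (t L / n) ^ n = exp (t L)`. Since `S` is closed
and a monoid under composition, `exp (t L) ∈ S`.
-/

open Filter Topology

section SeminormedRing

variable {A : Type*} [SeminormedRing A]

theorem norm_pow_succ_sub_pow_succ_le {a b : A} {C : ℝ} (ha : ‖a‖ ≤ C) (hb : ‖b‖ ≤ C) (n : ℕ) :
    ‖a ^ (n + 1) - b ^ (n + 1)‖ ≤ (n + 1) * ‖a - b‖ * C ^ n := by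
  induction n with
  | zero => simp
  | succ n ih =>
    have hC : 0 ≤ C := (norm_nonneg a).trans ha
    have hbC : ‖b ^ (n + 1)‖ ≤ C ^ (n + 1) :=
      (norm_pow_le' b n.succ_pos).trans (pow_le_pow_left₀ (norm_nonneg b) hb _)
    calc ‖a ^ (n + 2) - b ^ (n + 2)‖
        = ‖a * (a ^ (n + 1) - b ^ (n + 1)) + (a - b) * b ^ (n + 1)‖ := by
          rw [pow_succ' a, pow_succ' b]; noncomm_ring
      _ ≤ ‖a‖ * ‖a ^ (n + 1) - b ^ (n + 1)‖ + ‖a - b‖ * ‖b ^ (n + 1)‖ :=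
          (norm_add_le _ _).trans (add_le_add (norm_mul_le _ _) (norm_mul_le _ _))
      _ ≤ C * ((n + 1) * ‖a - b‖ * C ^ n) + ‖a - b‖ * C ^ (n + 1) := by gcongr
      _ = ((n + 1 : ℕ) + 1) * ‖a - b‖ * C ^ (n + 1) := by push_cast; ring

end SeminormedRing

section NormedAlgebra

variable {𝕂 A : Type*} [RCLike 𝕂] [SeminormedRing A] [NormedAlgebra 𝕂 A]

theorem tendsto_natCast_inv_nhdsNE_zero :
    Tendsto (fun n : ℕ => (n : 𝕂)⁻¹) atTop (𝓝[≠] 0) :=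
  tendsto_nhdsWithin_iff.mpr ⟨tendsto_inv_atTop_nhds_zero_nat,
    (eventually_ne_atTop 0).mono fun _ hn => inv_ne_zero (Nat.cast_ne_zero.mpr hn)⟩

theorem norm_pow_sub_pow_le_mul_exp [NormOneClass A] {a b : A} {n : ℕ} {M : ℝ}
    (ha : ‖(n : 𝕂) • (a - 1)‖ ≤ M) (hb : ‖(n : 𝕂) • (b - 1)‖ ≤ M) :
    ‖a ^ n - b ^ n‖ ≤ ‖(n : 𝕂) • (a - 1) - (n : 𝕂) • (b - 1)‖ * Real.exp M := by
  rcases n with _ | m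
  · simp
  have hm : (0 : ℝ) < m + 1 := by positivity
  have hM : 0 ≤ M := (norm_nonneg _).trans ha
  have hnorm : ∀ c : A, ‖((m + 1 : ℕ) : 𝕂) • (c - 1)‖ ≤ M → ‖c‖ ≤ 1 + M / (m + 1) := by
    intro c hc
    rw [norm_smul, RCLike.norm_natCast, Nat.cast_succ] at hc
    calc ‖c‖ = ‖1 + (c - 1)‖ := by rw [add_sub_cancel]
      _ ≤ 1 + ‖c - 1‖ := (norm_add_le _ _).trans_eq (by rw [norm_one])
      _ ≤ 1 + M / (m + 1) := by gcongr; rw [le_div_iff₀ hm]; linarith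
  have hexp : (1 + M / (m + 1)) ^ m ≤ Real.exp M :=
    calc (1 + M / (m + 1)) ^ m ≤ (1 + M / (m + 1)) ^ (m + 1) :=
          pow_le_pow_right₀ (by linarith [div_nonneg hM hm.le]) m.le_succ
      _ ≤ Real.exp M := by
          simpa [sub_eq_add_neg, neg_div] using
            Real.one_sub_div_pow_le_exp_neg (n := m + 1) (t := -M) (by linarith)
  calc ‖a ^ (m + 1) - b ^ (m + 1)‖ ≤ (m + 1) * ‖a - b‖ * (1 + M / (m + 1)) ^ m :=
        norm_pow_succ_sub_pow_succ_le (hnorm a ha) (hnorm b hb) m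
    _ = ‖((m + 1 : ℕ) : 𝕂) • (a - 1) - ((m + 1 : ℕ) : 𝕂) • (b - 1)‖ * (1 + M / (m + 1)) ^ m := by
        rw [← smul_sub, sub_sub_sub_cancel_right, norm_smul, RCLike.norm_natCast, Nat.cast_succ]
    _ ≤ _ := by gcongr

theorem tendsto_pow_sub_pow_of_tendsto_smul_sub_one [NormOneClass A] {F G : ℕ → A} {X : A}
    (hF : Tendsto (fun n : ℕ => (n : 𝕂) • (F n - 1)) atTop (𝓝 X))
    (hG : Tendsto (fun n : ℕ => (n : 𝕂) • (G n - 1)) atTop (𝓝 X)) :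
    Tendsto (fun n => F n ^ n - G n ^ n) atTop (𝓝 0) := by
  have hbound : Tendsto (fun n : ℕ => ‖(n : 𝕂) • (F n - 1) - (n : 𝕂) • (G n - 1)‖ *
      Real.exp (‖X‖ + 1)) atTop (𝓝 0) := by
    simpa using (hF.sub hG).norm.mul_const (Real.exp (‖X‖ + 1))
  refine squeeze_zero_norm' ?_ hbound
  filter_upwards [hF.norm.eventually (gt_mem_nhds (lt_add_one ‖X‖)),
    hG.norm.eventually (gt_mem_nhds (lt_add_one ‖X‖))] with n hFn hGn
  exact norm_pow_sub_pow_le_mul_exp hFn.le hGn.le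

theorem tendsto_smul_mul_sub_one {F G : ℕ → A} {X Y : A}
    (hF : Tendsto (fun n : ℕ => (n : 𝕂) • (F n - 1)) atTop (𝓝 X))
    (hG : Tendsto (fun n : ℕ => (n : 𝕂) • (G n - 1)) atTop (𝓝 Y)) :
    Tendsto (fun n : ℕ => (n : 𝕂) • (F n * G n - 1)) atTop (𝓝 (X + Y)) := by
  have hG1 : Tendsto G atTop (𝓝 1) := by
    have h := (tendsto_natCast_inv_nhdsNE_zero (𝕂 := 𝕂)).mono_right nhdsWithin_le_nhds
      |>.smul hG |>.const_add 1
    rw [zero_smul, add_zero] at h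
    refine h.congr' ?_
    filter_upwards [eventually_ne_atTop 0] with n hn
    rw [smul_smul, inv_mul_cancel₀ (Nat.cast_ne_zero.mpr hn), one_smul, add_sub_cancel]
  have h := (hF.mul hG1).add hG
  rw [mul_one] at h
  refine h.congr fun n => ?_
  rw [smul_mul_assoc, ← smul_add]
  congr 1
  noncomm_ring

theorem tendsto_smul_one_add_ofReal_div_smul_sub_one (t : ℝ) (Z : A) :
    Tendsto (fun n : ℕ => (n : 𝕂) • (1 + ((t / n : ℝ) : 𝕂) • Z - 1)) atTop
      (𝓝 ((t : 𝕂) • Z)) := by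
  refine tendsto_const_nhds.congr' ?_
  filter_upwards [eventually_ne_atTop 0] with n hn
  rw [add_sub_cancel_left, smul_smul, RCLike.ofReal_div, RCLike.ofReal_natCast,
    mul_div_cancel₀ _ (Nat.cast_ne_zero.mpr hn)]

theorem tendsto_smul_list_prod_one_add_sub_one (t : ℝ) (l : List A) :
    Tendsto (fun n : ℕ => (n : 𝕂) • ((l.map fun X => 1 + ((t / n : ℝ) : 𝕂) • X).prod - 1))
      atTop (𝓝 ((t : 𝕂) • l.sum)) := by
  induction l with
  | nil => simpa using tendsto_const_nhds
  | cons X l ih =>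
    simpa only [List.map_cons, List.prod_cons, List.sum_cons, smul_add] using
      tendsto_smul_mul_sub_one (tendsto_smul_one_add_ofReal_div_smul_sub_one t X) ih

end NormedAlgebra

section BanachAlgebra

variable {𝕂 A : Type*} [RCLike 𝕂] [NormedRing A] [NormedAlgebra 𝕂 A] [CompleteSpace A]

theorem tendsto_smul_exp_inv_smul_sub_one (X : A) :
    Tendsto (fun n : ℕ => (n : 𝕂) • (NormedSpace.exp ((n : 𝕂)⁻¹ • X) - 1)) atTop (𝓝 X) := by
  have hslope := (hasDerivAt_exp_smul_const (𝕂 := 𝕂) X 0).tendsto_slope_zero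
  simp only [zero_add, zero_smul, NormedSpace.exp_zero, one_mul] at hslope
  simpa only [Function.comp_def, inv_inv] using hslope.comp tendsto_natCast_inv_nhdsNE_zero

theorem tendsto_pow_exp_of_tendsto_smul_sub_one [NormOneClass A] {F : ℕ → A} {X : A}
    (hF : Tendsto (fun n : ℕ => (n : 𝕂) • (F n - 1)) atTop (𝓝 X)) :
    Tendsto (fun n => F n ^ n) atTop (𝓝 (NormedSpace.exp X)) := by
  let : NormedAlgebra ℚ A := .restrictScalars ℚ 𝕂 A
  have hexp : ∀ᶠ n : ℕ in atTop, NormedSpace.exp ((n : 𝕂)⁻¹ • X) ^ n = NormedSpace.exp X := by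
    filter_upwards [eventually_ne_atTop 0] with n hn
    rw [← NormedSpace.exp_nsmul, ← Nat.cast_smul_eq_nsmul 𝕂, smul_smul,
      mul_inv_cancel₀ (Nat.cast_ne_zero.mpr hn), one_smul]
  have hdiff := (tendsto_pow_sub_pow_of_tendsto_smul_sub_one hF
    (tendsto_smul_exp_inv_smul_sub_one X)).add_const (NormedSpace.exp X)
  rw [zero_add] at hdiff
  refine hdiff.congr' ?_
  filter_upwards [hexp] with n hn
  rw [hn, sub_add_cancel]

end BanachAlgebra

/- Stated for operators on `E` rather than in a Banach algebra: with the Frobenius norm, the type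
`Matrix (Fin d) (Fin d) ℂ →L[ℂ] Matrix (Fin d) (Fin d) ℂ` elaborates with the product topology on
matrices, so instance search finds no `NormedRing` on it, but it unifies with this statement. -/
theorem exp_smul_list_sum_mem {E : Type*} [NormedAddCommGroup E] [NormedSpace ℂ E]
    [CompleteSpace E] [Nontrivial E] (T : Submonoid (E →L[ℂ] E))
    (hT : IsClosed (T : Set (E →L[ℂ] E))) {l : List (E →L[ℂ] E)}
    (hl : ∀ s : ℝ, 0 ≤ s → (l.map fun X => 1 + (s : ℂ) • X).prod ∈ T) {t : ℝ} (ht : 0 ≤ t) :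
    NormedSpace.exp ((t : ℂ) • l.sum) ∈ T :=
  hT.mem_of_tendsto
    (tendsto_pow_exp_of_tendsto_smul_sub_one (tendsto_smul_list_prod_one_add_sub_one t l))
    (Eventually.of_forall fun n => T.pow_mem (hl _ (div_nonneg ht n.cast_nonneg)) n)

section CompletelyPositive

open scoped Kronecker

theorem idTensor_conj {k m d : Type*} [Fintype k] [DecidableEq k] [Fintype m] [Fintype d]
    (A : Matrix d m ℂ) (B : Matrix (k × m) (k × m) ℂ) :
    idTensor (k := k) (fun X => A * X * Aᴴ) B =
      ((1 : Matrix k k ℂ) ⊗ₖ A) * B * ((1 : Matrix k k ℂ) ⊗ₖ A)ᴴ := by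
  ext ⟨p, i⟩ ⟨q, j⟩
  simp [idTensor, Matrix.mul_apply, Matrix.kroneckerMap_apply, Matrix.one_apply,
    Fintype.sum_prod_type, Finset.sum_mul, ite_mul, apply_ite (starRingEnd ℂ), mul_ite]

theorem isCompletelyPositive_conj {m d : Type*} [Fintype m] [Fintype d] (A : Matrix d m ℂ) :
    IsCompletelyPositive fun X : Matrix m m ℂ => A * X * Aᴴ := fun _ B hB =>
  idTensor_conj A B ▸ hB.mul_mul_conjTranspose_same _

end CompletelyPositive

theorem coe_one_add_smul_mulLeft_mul_one_add_smul_mulRight {n : Type*} [Fintype n]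
    [DecidableEq n] (K : Matrix n n ℂ) (s : ℝ) :
    ⇑((1 + (s : ℂ) • LinearMap.toContinuousLinearMap (LinearMap.mulLeft ℂ K)) *
        (1 + (s : ℂ) • LinearMap.toContinuousLinearMap (LinearMap.mulRight ℂ Kᴴ))) =
      fun X => (1 + (s : ℂ) • K) * X * (1 + (s : ℂ) • K)ᴴ := by
  funext X
  simp [Matrix.conjTranspose_add, Matrix.conjTranspose_smul, mul_add, add_mul, mul_assoc]

/-- Let `S` be a closed convex cone of linear maps on `ℂ^{d×d}` which contains all completely
positive maps, contains the identity map, and is closed under composition. Then for every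
`Φ ∈ S`, every `K ∈ ℂ^{d×d}`, and every `t ≥ 0`, the map `exp (t L)` belongs to `S`, where
`L X = K X + X Kᴴ + Φ X`. -/
theorem exp_lindblad_mem_semigroup (d : ℕ)
    (S : Set (Matrix (Fin d) (Fin d) ℂ →L[ℂ] Matrix (Fin d) (Fin d) ℂ))
    (hclosed : IsClosed S)
    (hadd : ∀ Φ ∈ S, ∀ Ψ ∈ S, Φ + Ψ ∈ S)
    (hsmul : ∀ Φ ∈ S, ∀ c : ℝ, 0 ≤ c → (c : ℂ) • Φ ∈ S)
    (hCP : ∀ Φ : Matrix (Fin d) (Fin d) ℂ →L[ℂ] Matrix (Fin d) (Fin d) ℂ,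
      IsCompletelyPositive ⇑Φ → Φ ∈ S)
    (hid : ContinuousLinearMap.id ℂ (Matrix (Fin d) (Fin d) ℂ) ∈ S)
    (hcomp : ∀ Φ ∈ S, ∀ Ψ ∈ S, Φ.comp Ψ ∈ S) :
    ∀ Φ ∈ S, ∀ (K : Matrix (Fin d) (Fin d) ℂ) (t : ℝ), 0 ≤ t →
      @NormedSpace.exp _ _ _ (@NonUnitalSeminormedRing.toIsTopologicalRing _
        ContinuousLinearMap.toNormedRing.toNonUnitalNormedRing.toNonUnitalSeminormedRing) ((t : ℂ) •
        (LinearMap.toContinuousLinearMap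
          (LinearMap.mulLeft ℂ K + LinearMap.mulRight ℂ Kᴴ) + Φ)) ∈ S := by
  intro Φ hΦ K t ht
  rcases subsingleton_or_nontrivial (Matrix (Fin d) (Fin d) ℂ) with _ | _
  · have : Subsingleton (Matrix (Fin d) (Fin d) ℂ →L[ℂ] Matrix (Fin d) (Fin d) ℂ) :=
      ⟨fun f g => ContinuousLinearMap.ext fun _ => Subsingleton.elim _ _⟩
    exact (congrArg (· ∈ S) (Subsingleton.elim _ (ContinuousLinearMap.id ℂ _))).mpr hid
  let T : Submonoid (Matrix (Fin d) (Fin d) ℂ →L[ℂ] Matrix (Fin d) (Fin d) ℂ) :=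
    { carrier := S, one_mem' := hid, mul_mem' := fun ha hb => hcomp _ ha _ hb }
  set ℓ := LinearMap.toContinuousLinearMap (LinearMap.mulLeft ℂ K)
  set r := LinearMap.toContinuousLinearMap (LinearMap.mulRight ℂ Kᴴ)
  have hsum : LinearMap.toContinuousLinearMap (LinearMap.mulLeft ℂ K + LinearMap.mulRight ℂ Kᴴ) + Φ
      = [ℓ, r, Φ].sum := by
    simp [ℓ, r, add_assoc]
  rw [hsum]
  refine exp_smul_list_sum_mem T hclosed (fun s hs => ?_) ht
  -- `simp` needs the goal at the instances of this context; `exact h` unifies with the lemma's.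
  have h : ([ℓ, r, Φ].map fun X => 1 + (s : ℂ) • X).prod ∈ T := by
    simp only [List.map_cons, List.map_nil, List.prod_cons, List.prod_nil, mul_one, ← mul_assoc]
    exact T.mul_mem
      (hCP _ (coe_one_add_smul_mulLeft_mul_one_add_smul_mulRight K s ▸ isCompletelyPositive_conj _))
      (hadd _ hid _ (hsmul Φ hΦ s hs))
  exact h
end

section
/- A Hermitian-preserving linear map Φ on ℂ^{d×d} satisfies: if there exists K' ∈ ℂ^{d×d} such that Φ − K'(·) − (·)(K')† is completely positive, then e^{t(K(·)+(·)K†+Φ)} is completely positive for all K ∈ ℂ^{d×d} and all t ≥ 0. -/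
open scoped Matrix ComplexOrder

attribute [local instance] Matrix.frobeniusSeminormedAddCommGroup
  Matrix.frobeniusNormedAddCommGroup Matrix.frobeniusNormedSpace

instance instIsTopologicalRingMatrixCLM (d : ℕ) :
    IsTopologicalRing (Matrix (Fin d) (Fin d) ℂ →L[ℂ] Matrix (Fin d) (Fin d) ℂ) := by
  exact @NonUnitalSeminormedRing.toIsTopologicalRing _
    (@ContinuousLinearMap.toSeminormedRing ℂ (Matrix (Fin d) (Fin d) ℂ) _ _ _).toNonUnitalSeminormedRing

/-!
Write `L_M X = M X + X Mᴴ`. With `Ψ := Φ - L_{K'}` completely positive, the generator splits as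
`t (L_K + Φ) = L_{t (K + K')} + t Ψ`. Both summands generate completely positive semigroups:
`exp (s L_M)` is the conjugation `X ↦ e^{sM} X (e^{sM})ᴴ`, and `exp (s Ψ)` is a limit of sums of
nonnegative multiples of powers of `Ψ`. Completely positive maps form a closed subsemiring of the
operator algebra, so the Lie–Trotter formula `exp (A + B) = lim (exp (A / n) exp (B / n)) ^ n`
shows that the exponential of the sum is completely positive as well.
-/

open NormedSpace Filter Topology Asymptotics
open scoped Kronecker

theorem norm_exp_le_exp_norm {𝔸 : Type*} [NormedRing 𝔸] [NormedAlgebra ℚ 𝔸] [NormOneClass 𝔸]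
    (x : 𝔸) : ‖exp x‖ ≤ Real.exp ‖x‖ := by
  rw [exp_eq_tsum (𝕂 := ℚ), Real.exp_eq_exp_ℝ, exp_eq_tsum_div]
  refine (norm_tsum_le_tsum_norm (norm_expSeries_summable' x)).trans <|
    Summable.tsum_le_tsum (fun n => ?_) (norm_expSeries_summable' x)
      (Real.summable_pow_div_factorial ‖x‖)
  rw [norm_smul, norm_inv, ← Rat.norm_cast_real, Rat.cast_natCast, Real.norm_natCast,
    div_eq_inv_mul]
  gcongr
  exact norm_pow_le x n

theorem norm_pow_sub_pow_le {𝔸 : Type*} [NormedRing 𝔸] [NormOneClass 𝔸] {u v : 𝔸} {C : ℝ}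
    (hC : 1 ≤ C) (hu : ‖u‖ ≤ C) (hv : ‖v‖ ≤ C) (n : ℕ) :
    ‖u ^ n - v ^ n‖ ≤ n * C ^ n * ‖u - v‖ := by
  induction n with
  | zero => simp
  | succ n ih =>
    have hvn : ‖v ^ n‖ ≤ C ^ n := (norm_pow_le v n).trans (pow_le_pow_left₀ (norm_nonneg v) hv n)
    have hCn : C ^ n ≤ C ^ (n + 1) := pow_le_pow_right₀ hC n.le_succ
    calc ‖u ^ (n + 1) - v ^ (n + 1)‖ = ‖u * (u ^ n - v ^ n) + (u - v) * v ^ n‖ := by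
          rw [pow_succ' u, pow_succ' v]; noncomm_ring
      _ ≤ C * (n * C ^ n * ‖u - v‖) + ‖u - v‖ * C ^ n := by
          refine (norm_add_le _ _).trans (add_le_add ?_ ?_) <;>
            refine (norm_mul_le _ _).trans ?_ <;> gcongr
      _ ≤ (n + 1 : ℕ) * C ^ (n + 1) * ‖u - v‖ := by
          push_cast
          linear_combination mul_le_mul_of_nonneg_left hCn (norm_nonneg (u - v))

section Trotter

variable {𝕂 𝔸 : Type*} [RCLike 𝕂] [NormedRing 𝔸] [NormedAlgebra 𝕂 𝔸] [CompleteSpace 𝔸]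

theorem isLittleO_exp_smul_mul_exp_smul_sub_exp_smul (a b : 𝔸) :
    (fun s : 𝕂 => exp (s • a) * exp (s • b) - exp (s • (a + b))) =o[𝓝 0] fun s => s := by
  have h := ((hasDerivAt_exp_smul_const a (0 : 𝕂)).mul
    (hasDerivAt_exp_smul_const b 0)).sub (hasDerivAt_exp_smul_const (a + b) 0)
  simp only [zero_smul, exp_zero, one_mul, mul_one, sub_self] at h
  simpa using hasDerivAt_iff_isLittleO.mp h

theorem tendsto_mul_norm_exp_inv_smul_mul_exp_inv_smul_sub (a b : 𝔸) :
    Tendsto (fun n : ℕ => n * ‖exp ((n : 𝕂)⁻¹ • a) * exp ((n : 𝕂)⁻¹ • b) -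
      exp ((n : 𝕂)⁻¹ • (a + b))‖) atTop (𝓝 0) := by
  have h := ((isLittleO_exp_smul_mul_exp_smul_sub_exp_smul (𝕂 := 𝕂) a b).comp_tendsto
    tendsto_inv_atTop_nhds_zero_nat).norm_norm.tendsto_div_nhds_zero
  refine h.congr fun n => ?_
  simp [div_eq_mul_inv, mul_comm]

theorem tendsto_exp_inv_smul_mul_exp_inv_smul_pow [NormOneClass 𝔸] (a b : 𝔸) :
    Tendsto (fun n : ℕ => (exp ((n : 𝕂)⁻¹ • a) * exp ((n : 𝕂)⁻¹ • b)) ^ n) atTop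
      (𝓝 (exp (a + b))) := by
  let _ : NormedAlgebra ℚ 𝔸 := NormedAlgebra.restrictScalars ℚ 𝕂 𝔸
  rw [tendsto_iff_norm_sub_tendsto_zero]
  refine squeeze_zero' (Eventually.of_forall fun n => norm_nonneg _) ?_ (by
    simpa only [mul_zero] using (tendsto_mul_norm_exp_inv_smul_mul_exp_inv_smul_sub (𝕂 := 𝕂) a b
      ).const_mul (Real.exp (‖a‖ + ‖b‖)))
  filter_upwards [eventually_ne_atTop 0] with n hn
  set s : 𝕂 := (n : 𝕂)⁻¹
  have hexp : ∀ x : 𝔸, ‖exp (s • x)‖ ≤ Real.exp (‖x‖ / n) := fun x =>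
    (norm_exp_le_exp_norm _).trans (by simp [s, norm_smul, div_eq_inv_mul])
  set C := Real.exp ((‖a‖ + ‖b‖) / n)
  have hu : ‖exp (s • (a + b))‖ ≤ C :=
    (hexp _).trans (Real.exp_le_exp.2 (by gcongr; exact norm_add_le a b))
  have hv : ‖exp (s • a) * exp (s • b)‖ ≤ C := by
    refine (norm_mul_le _ _).trans ((mul_le_mul (hexp a) (hexp b) (norm_nonneg _)
      (Real.exp_pos _).le).trans_eq ?_)
    rw [← Real.exp_add, ← add_div]
  have hun : exp (s • (a + b)) ^ n = exp (a + b) := by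
    rw [← exp_nsmul, ← Nat.cast_smul_eq_nsmul 𝕂, smul_smul,
      mul_inv_cancel₀ (by exact_mod_cast hn), one_smul]
  have hCn : C ^ n = Real.exp (‖a‖ + ‖b‖) := by
    rw [← Real.exp_nat_mul, mul_div_cancel₀ _ (by exact_mod_cast hn)]
  calc ‖(exp (s • a) * exp (s • b)) ^ n - exp (a + b)‖
      ≤ n * C ^ n * ‖exp (s • a) * exp (s • b) - exp (s • (a + b))‖ := by
        rw [← hun]; exact norm_pow_sub_pow_le (Real.one_le_exp (by positivity)) hv hu n
    _ = _ := by rw [hCn]; ring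

end Trotter

namespace ContinuousLinearMap

variable (𝕂 𝔸 : Type*) [RCLike 𝕂] [NormedRing 𝔸] [NormedAlgebra 𝕂 𝔸]

noncomputable def mulLeftRingHom : 𝔸 →+* (𝔸 →L[𝕂] 𝔸) where
  toFun := mul 𝕂 𝔸
  map_one' := by ext; simp
  map_mul' a b := by ext; simp [mul_assoc]
  map_zero' := by simp
  map_add' := by simp

noncomputable def mulRightRingHom : 𝔸ᵐᵒᵖ →+* (𝔸 →L[𝕂] 𝔸) where
  toFun b := (mul 𝕂 𝔸).flip b.unop
  map_one' := by ext; simp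
  map_mul' a b := by ext; simp [mul_assoc]
  map_zero' := by simp
  map_add' := by simp

variable {𝕂 𝔸} [CompleteSpace 𝔸]

theorem exp_mul_add_mul_flip_apply (a b x : 𝔸) :
    exp (mul 𝕂 𝔸 a + (mul 𝕂 𝔸).flip b) x = exp a * x * exp b := by
  let _ : NormedAlgebra ℚ 𝔸 := NormedAlgebra.restrictScalars ℚ 𝕂 𝔸
  let _ : NormedAlgebra ℚ (𝔸 →L[𝕂] 𝔸) := NormedAlgebra.restrictScalars ℚ 𝕂 _
  have hcomm : Commute (mul 𝕂 𝔸 a) ((mul 𝕂 𝔸).flip b) := by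
    ext x; simp [mul_assoc]
  have hL : exp (mul 𝕂 𝔸 a) = mul 𝕂 𝔸 (exp a) :=
    (map_exp (mulLeftRingHom 𝕂 𝔸) (mul 𝕂 𝔸).continuous a).symm
  have hR : exp ((mul 𝕂 𝔸).flip b) = (mul 𝕂 𝔸).flip (exp b) := by
    have := map_exp (mulRightRingHom 𝕂 𝔸)
      ((mul 𝕂 𝔸).flip.continuous.comp MulOpposite.continuous_unop) (MulOpposite.op b)
    rw [exp_op] at this
    exact this.symm
  rw [exp_add_of_commute hcomm, hL, hR]
  simp [mul_assoc]

end ContinuousLinearMap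

namespace IsCompletelyPositive

variable {l m d : Type*} [Fintype l] [Fintype m] [Fintype d]

theorem id : IsCompletelyPositive (id : Matrix m m ℂ → Matrix m m ℂ) := fun _ _ hA => hA

theorem comp {f : Matrix m m ℂ → Matrix d d ℂ} {g : Matrix l l ℂ → Matrix m m ℂ}
    (hf : IsCompletelyPositive f) (hg : IsCompletelyPositive g) : IsCompletelyPositive (f ∘ g) :=
  fun n A hA => hf n _ (hg n A hA)

theorem zero : IsCompletelyPositive (0 : Matrix m m ℂ → Matrix d d ℂ) := fun _ _ _ => by
  convert Matrix.PosSemidef.zero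
  ext; rfl

theorem add {f g : Matrix m m ℂ → Matrix d d ℂ} (hf : IsCompletelyPositive f)
    (hg : IsCompletelyPositive g) : IsCompletelyPositive (f + g) := fun n A hA => by
  convert (hf n A hA).add (hg n A hA) using 1
  ext; rfl

theorem smul {f : Matrix m m ℂ → Matrix d d ℂ} (hf : IsCompletelyPositive f) {c : ℂ}
    (hc : 0 ≤ c) : IsCompletelyPositive (c • f) := fun n A hA => by
  convert (hf n A hA).smul hc using 1
  ext; simp [idTensor]

theorem of_isEmpty [IsEmpty d] (Φ : Matrix m m ℂ → Matrix d d ℂ) : IsCompletelyPositive Φ :=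
  fun _ _ _ => by
    convert Matrix.PosSemidef.zero
    exact Subsingleton.elim _ _

end IsCompletelyPositive

theorem idTensor_mul_mul_conjTranspose {k m d : Type*} [Fintype k] [DecidableEq k] [Fintype m]
    [Fintype d] (N : Matrix d m ℂ) (A : Matrix (k × m) (k × m) ℂ) :
    idTensor (fun X : Matrix m m ℂ => N * X * Nᴴ) A =
      ((1 : Matrix k k ℂ) ⊗ₖ N) * A * ((1 : Matrix k k ℂ) ⊗ₖ N)ᴴ := by
  ext ⟨i, p⟩ ⟨j, q⟩
  simp [idTensor, Matrix.mul_apply, Fintype.sum_prod_type, Matrix.one_apply,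
    apply_ite (starRingEnd ℂ)]

theorem isCompletelyPositive_mul_mul_conjTranspose {m d : Type*} [Fintype m] [Fintype d]
    (N : Matrix d m ℂ) : IsCompletelyPositive fun X : Matrix m m ℂ => N * X * Nᴴ :=
  fun n A hA => by
    rw [idTensor_mul_mul_conjTranspose]
    exact hA.mul_mul_conjTranspose_same _

theorem Matrix.isClosed_setOf_posSemidef {n : Type*} [Fintype n] :
    IsClosed {A : Matrix n n ℂ | A.PosSemidef} := by
  simp only [Matrix.posSemidef_iff_dotProduct_mulVec, Set.ofPred_and, Set.ofPred_forall]
  exact (isClosed_eq continuous_id.matrix_conjTranspose continuous_id).inter <|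
    isClosed_iInter fun x => isClosed_le continuous_const <|
      continuous_const.dotProduct (continuous_id.matrix_mulVec continuous_const)

section FrobeniusTopology

/- Instance search gives matrices the product topology, which agrees with the topology of the
Frobenius norm only up to unfolding, so the operator-norm Banach algebra structure on
`Matrix d d ℂ →L[ℂ] Matrix d d ℂ` is not found. Erasing the product instances fixes this; the
results of this section apply to product-topology statements by definitional unfolding. -/
attribute [-instance] instTopologicalSpaceMatrix Matrix.instUniformSpace
attribute [local instance] Matrix.frobeniusNormedRing Matrix.frobeniusNormedAlgebra

variable {m d : Type*} [Fintype m] [Fintype d]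

theorem isClosed_setOf_isCompletelyPositive :
    IsClosed {T : Matrix m m ℂ →L[ℂ] Matrix d d ℂ | IsCompletelyPositive T} := by
  have : {T : Matrix m m ℂ →L[ℂ] Matrix d d ℂ | IsCompletelyPositive T} =
      ⋂ (n : ℕ) (A : Matrix (Fin n × m) (Fin n × m) ℂ) (_ : A.PosSemidef),
        (fun T : Matrix m m ℂ →L[ℂ] Matrix d d ℂ => idTensor T A) ⁻¹' {B | B.PosSemidef} := by
    ext; simp [IsCompletelyPositive]
  rw [this]
  refine isClosed_iInter fun n => isClosed_iInter fun A => isClosed_iInter fun _ =>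
    Matrix.isClosed_setOf_posSemidef.preimage <| continuous_pi fun p => continuous_pi fun q => ?_
  exact (continuous_apply q.2).comp ((continuous_apply p.2).comp (continuous_eval_const _))

variable (d) in
def completelyPositiveSubsemiring : Subsemiring (Matrix d d ℂ →L[ℂ] Matrix d d ℂ) where
  carrier := {T | IsCompletelyPositive T}
  mul_mem' hS hT := hS.comp hT
  one_mem' := IsCompletelyPositive.id
  add_mem' hS hT := hS.add hT
  zero_mem' := IsCompletelyPositive.zero

theorem IsCompletelyPositive.exp {T : Matrix d d ℂ →L[ℂ] Matrix d d ℂ}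
    (hT : IsCompletelyPositive T) : IsCompletelyPositive ⇑(exp T) :=
  isClosed_setOf_isCompletelyPositive.mem_of_tendsto
    (exp_series_hasSum_exp' (𝕂 := ℂ) T).tendsto_sum_nat <| Eventually.of_forall fun _ =>
      sum_mem (S := completelyPositiveSubsemiring d) fun k _ =>
        (pow_mem (S := completelyPositiveSubsemiring d) hT k).smul (by simp)

theorem isCompletelyPositive_exp_add_of_exp_smul {A B : Matrix d d ℂ →L[ℂ] Matrix d d ℂ}
    (hA : ∀ s : ℝ, 0 ≤ s → IsCompletelyPositive ⇑(exp ((s : ℂ) • A)))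
    (hB : ∀ s : ℝ, 0 ≤ s → IsCompletelyPositive ⇑(exp ((s : ℂ) • B))) :
    IsCompletelyPositive ⇑(exp (A + B)) := by
  rcases isEmpty_or_nonempty d with hd | hd
  · exact .of_isEmpty _
  refine isClosed_setOf_isCompletelyPositive.mem_of_tendsto
    (tendsto_exp_inv_smul_mul_exp_inv_smul_pow (𝕂 := ℂ) A B) (Eventually.of_forall fun n => ?_)
  have hn : ((n : ℂ))⁻¹ = (((n : ℝ)⁻¹ : ℝ) : ℂ) := by push_cast; rfl
  rw [hn]
  exact pow_mem (S := completelyPositiveSubsemiring d)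
    (mul_mem (hA _ (by positivity)) (hB _ (by positivity))) n

theorem isCompletelyPositive_exp_smul_mulLeft_add_mulRight_conjTranspose [DecidableEq d]
    (M : Matrix d d ℂ) (s : ℝ) :
    IsCompletelyPositive ⇑(exp ((s : ℂ) • LinearMap.toContinuousLinearMap
      (LinearMap.mulLeft ℂ M + LinearMap.mulRight ℂ Mᴴ))) := by
  set N := (s : ℂ) • M
  have hgen : (s : ℂ) • LinearMap.toContinuousLinearMap
      (LinearMap.mulLeft ℂ M + LinearMap.mulRight ℂ Mᴴ) =
      ContinuousLinearMap.mul ℂ _ N + (ContinuousLinearMap.mul ℂ _).flip Nᴴ := by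
    ext1 X; simp [N, smul_add]
  have hconj : ⇑(exp ((s : ℂ) • LinearMap.toContinuousLinearMap
      (LinearMap.mulLeft ℂ M + LinearMap.mulRight ℂ Mᴴ))) = fun X => exp N * X * (exp N)ᴴ := by
    ext1 X
    rw [hgen, ContinuousLinearMap.exp_mul_add_mul_flip_apply]
    exact congrArg _ (Matrix.exp_conjTranspose N)
  rw [hconj]
  exact isCompletelyPositive_mul_mul_conjTranspose _

theorem IsCompletelyPositive.exp_mulLeft_add_mulRight_conjTranspose_add [DecidableEq d]
    (M : Matrix d d ℂ) {Ψ : Matrix d d ℂ →L[ℂ] Matrix d d ℂ} (hΨ : IsCompletelyPositive Ψ) :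
    IsCompletelyPositive ⇑(NormedSpace.exp (LinearMap.toContinuousLinearMap
      (LinearMap.mulLeft ℂ M + LinearMap.mulRight ℂ Mᴴ) + Ψ)) :=
  isCompletelyPositive_exp_add_of_exp_smul
    (fun s _ => isCompletelyPositive_exp_smul_mulLeft_add_mulRight_conjTranspose M s)
    fun _ hs => (hΨ.smul (by exact_mod_cast hs)).exp

end FrobeniusTopology

theorem exp_completelyPositive_of_ccp_general (d : ℕ)
    (Φ : Matrix (Fin d) (Fin d) ℂ →L[ℂ] Matrix (Fin d) (Fin d) ℂ)
    (hccp : ∃ K' : Matrix (Fin d) (Fin d) ℂ,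
      IsCompletelyPositive fun X => Φ X - K' * X - X * K'ᴴ) :
    ∀ (K : Matrix (Fin d) (Fin d) ℂ) (t : ℝ), 0 ≤ t →
      IsCompletelyPositive ⇑(NormedSpace.exp ((t : ℂ) •
        (LinearMap.toContinuousLinearMap
          (LinearMap.mulLeft ℂ K + LinearMap.mulRight ℂ Kᴴ) + Φ))) := by
  intro K t ht
  obtain ⟨K', hK'⟩ := hccp
  set G : Matrix (Fin d) (Fin d) ℂ → (Matrix (Fin d) (Fin d) ℂ →L[ℂ] Matrix (Fin d) (Fin d) ℂ) :=
    fun M => LinearMap.toContinuousLinearMap (LinearMap.mulLeft ℂ M + LinearMap.mulRight ℂ Mᴴ)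
  have hΨ : IsCompletelyPositive ⇑(Φ - G K') := by
    convert hK' using 2; simp [G, sub_sub]
  have hsplit : (t : ℂ) • (G K + Φ) = G ((t : ℂ) • (K + K')) + (t : ℂ) • (Φ - G K') := by
    ext1 X; simp [G, Matrix.add_mul, Matrix.mul_add]; module
  rw [hsplit]
  exact IsCompletelyPositive.exp_mulLeft_add_mulRight_conjTranspose_add _
    (hΨ.smul (by exact_mod_cast ht))

/-- Let `Φ` be a Hermitian-preserving linear map on `ℂ^{d×d}`. If there exists
`K' ∈ ℂ^{d×d}` such that `X ↦ Φ X − K' X − X (K')ᴴ` is completely positive, then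
`exp (t (K(·) + (·)Kᴴ + Φ))` is completely positive for all `K ∈ ℂ^{d×d}` and all `t ≥ 0`. -/
theorem exp_completelyPositive_of_ccp (d : ℕ)
    (Φ : Matrix (Fin d) (Fin d) ℂ →L[ℂ] Matrix (Fin d) (Fin d) ℂ)
    (hherm : ∀ A : Matrix (Fin d) (Fin d) ℂ, A.IsHermitian → (Φ A).IsHermitian)
    (hccp : ∃ K' : Matrix (Fin d) (Fin d) ℂ,
      IsCompletelyPositive fun X => Φ X - K' * X - X * K'ᴴ) :
    ∀ (K : Matrix (Fin d) (Fin d) ℂ) (t : ℝ), 0 ≤ t →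
      IsCompletelyPositive ⇑(NormedSpace.exp ((t : ℂ) •
        (LinearMap.toContinuousLinearMap
          (LinearMap.mulLeft ℂ K + LinearMap.mulRight ℂ Kᴴ) + Φ))) :=
  exp_completelyPositive_of_ccp_general d Φ hccp
end

section
/- For all α ∈ (0,1] and all φ = (φ_1, φ_2, φ_3) ∈ ℂ^3, the 3×3 Hermitian matrix M with entries M_{11} = α(|φ_1|²+|φ_2|²), M_{12} = φ_1 \overline{φ_2}, M_{13} = α φ_1 \overline{φ_3}, M_{22} = (|φ_2|²+|φ_3|²)/α, M_{23} = φ_3 \overline{φ_2}, M_{33} = α|φ_3|² + |φ_1|²/α (and M Hermitian) is positive semi-definite. -/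
/-!
With `p, q, r = |φ₁|, |φ₂|, |φ₃|`, let `B` be the real matrix with the diagonal of `M` and
off-diagonal entries `-|M_ij|`. Then `x* M x ≥ |x|ᵀ B |x|`, so it suffices that `B` is positive
semidefinite, which follows from Sylvester's criterion: its diagonal entries and `2 × 2` principal
minors are sums of nonnegative monomials, and
`α det B = p²q⁴ + p⁴r² + α²q²r⁴ + p²q²r² - 4α²p²q²r²` is nonnegative by AM-GM, via
`p²q⁴ + p⁴r² ≥ 2p³q²r`, `α²q²r⁴ + p²q²r² ≥ 2αpq²r³` and `p² + αr² ≥ 2α²pr` for `α ≤ 1`.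
-/

open scoped ComplexOrder
open Matrix

theorem quadratic_form_nonneg_of_sq_le_mul {a b c : ℝ} (ha : 0 ≤ a) (hc : 0 ≤ c)
    (hb : b ^ 2 ≤ a * c) (x y : ℝ) : 0 ≤ a * x ^ 2 + 2 * b * x * y + c * y ^ 2 := by
  rcases ha.eq_or_lt with rfl | ha
  · obtain rfl : b = 0 := by nlinarith
    simpa using mul_nonneg hc (sq_nonneg y)
  · refine nonneg_of_mul_nonneg_right ?_ ha
    have hsq : a * (a * x ^ 2 + 2 * b * x * y + c * y ^ 2)
        = (a * x + b * y) ^ 2 + (a * c - b ^ 2) * y ^ 2 := by ring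
    rw [hsq]
    have : 0 ≤ a * c - b ^ 2 := by linarith
    positivity

theorem Matrix.posSemidef_fin_three_of_minors {a b c d e f : ℝ}
    (ha : 0 ≤ a) (hd : 0 ≤ d) (hf : 0 ≤ f)
    (hab : b ^ 2 ≤ a * d) (hac : c ^ 2 ≤ a * f) (hde : e ^ 2 ≤ d * f)
    (hdet : 0 ≤ (!![a, b, c; b, d, e; c, e, f]).det) :
    (!![a, b, c; b, d, e; c, e, f]).PosSemidef := by
  rw [det_fin_three] at hdet
  simp only [of_apply, cons_val', cons_val_zero, cons_val_fin_one, cons_val_one, cons_val]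
    at hdet
  refine .of_dotProduct_mulVec_nonneg ?_ fun v => ?_
  · ext i j; fin_cases i <;> fin_cases j <;> rfl
  suffices h : 0 ≤ a * v 0 ^ 2 + d * v 1 ^ 2 + f * v 2 ^ 2 + 2 * b * v 0 * v 1
      + 2 * c * v 0 * v 2 + 2 * e * v 1 * v 2 by
    have hform : star v ⬝ᵥ !![a, b, c; b, d, e; c, e, f] *ᵥ v = a * v 0 ^ 2 + d * v 1 ^ 2
        + f * v 2 ^ 2 + 2 * b * v 0 * v 1 + 2 * c * v 0 * v 2 + 2 * e * v 1 * v 2 := by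
      simp only [dotProduct, Pi.star_apply, star_trivial, mulVec, of_apply, cons_val',
        cons_val_fin_one, Fin.sum_univ_three, cons_val_zero, cons_val_one, cons_val]
      ring
    rwa [hform]
  rcases ha.eq_or_lt with rfl | ha
  · obtain rfl : b = 0 := by nlinarith
    obtain rfl : c = 0 := by nlinarith
    linarith [quadratic_form_nonneg_of_sq_le_mul hd hf hde (v 1) (v 2)]
  · -- Schur complement of the entry `a`
    have hschur := quadratic_form_nonneg_of_sq_le_mul (a := a * d - b ^ 2) (b := a * e - b * c)
      (c := a * f - c ^ 2) (by linarith) (by linarith) (by nlinarith [mul_nonneg ha.le hdet])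
      (v 1) (v 2)
    refine nonneg_of_mul_nonneg_right ?_ ha
    nlinarith [sq_nonneg (a * v 0 + b * v 1 + c * v 2)]

theorem Matrix.PosSemidef.of_comparison {n 𝕜 : Type*} [Fintype n] [RCLike 𝕜]
    {A : Matrix n n 𝕜} {B : Matrix n n ℝ} (hA : A.IsHermitian) (hB : B.PosSemidef)
    (hdiag : ∀ i, A i i = B i i) (hoff : ∀ i j, i ≠ j → ‖A i j‖ ≤ -B i j) :
    A.PosSemidef := by
  refine .of_dotProduct_mulVec_nonneg hA fun x =>
    RCLike.nonneg_iff.mpr ⟨?_, hA.im_star_dotProduct_mulVec_self x⟩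
  have hterm : ∀ i j, B i j * (‖x i‖ * ‖x j‖) ≤ RCLike.re (star (x i) * (A i j * x j)) := by
    intro i j
    rcases eq_or_ne i j with rfl | hij
    · have hsq : star (x i) * ((B i i : 𝕜) * x i) = ((B i i * ‖x i‖ ^ 2 : ℝ) : 𝕜) := by
        rw [RCLike.star_def, mul_left_comm, RCLike.conj_mul]; push_cast; ring
      rw [hdiag, hsq, RCLike.ofReal_re]
      exact le_of_eq (by ring)
    · calc B i j * (‖x i‖ * ‖x j‖) ≤ -(‖A i j‖ * (‖x i‖ * ‖x j‖)) := by
            nlinarith [hoff i j hij, mul_nonneg (norm_nonneg (x i)) (norm_nonneg (x j))]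
        _ = -‖star (x i) * (A i j * x j)‖ := by simp only [norm_mul, norm_star]; ring
        _ ≤ _ := neg_le_of_abs_le (RCLike.abs_re_le_norm _)
  calc 0 ≤ star (fun i => ‖x i‖) ⬝ᵥ B *ᵥ (fun i => ‖x i‖) := hB.dotProduct_mulVec_nonneg _
    _ = ∑ i, ∑ j, B i j * (‖x i‖ * ‖x j‖) := by
        simp only [dotProduct, mulVec, Finset.mul_sum, star_trivial]
        exact Finset.sum_congr rfl fun i _ => Finset.sum_congr rfl fun j _ => by ring
    _ ≤ ∑ i, ∑ j, RCLike.re (star (x i) * (A i j * x j)) :=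
        Finset.sum_le_sum fun i _ => Finset.sum_le_sum fun j _ => hterm i j
    _ = RCLike.re (star x ⬝ᵥ A *ᵥ x) := by
        simp only [dotProduct, mulVec, Pi.star_apply, Finset.mul_sum, map_sum]

theorem four_mul_sq_mul_sq_mul_sq_le {α p r : ℝ} (q : ℝ) (hα0 : 0 ≤ α) (hα1 : α ≤ 1) (hp : 0 ≤ p)
    (hr : 0 ≤ r) :
    4 * α ^ 2 * p ^ 2 * q ^ 2 * r ^ 2 ≤ p ^ 2 * q ^ 4 + p ^ 4 * r ^ 2 + α ^ 2 * q ^ 2 * r ^ 4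
      + p ^ 2 * q ^ 2 * r ^ 2 := by
  have hpr : 2 * α ^ 2 * p * r ≤ p ^ 2 + α * r ^ 2 := by
    have : α ^ 2 ≤ α := by nlinarith
    nlinarith [sq_nonneg (p - α * r), mul_nonneg hp hr, mul_nonneg (sq_nonneg r) hα0]
  calc 4 * α ^ 2 * p ^ 2 * q ^ 2 * r ^ 2 = 2 * p * q ^ 2 * r * (2 * α ^ 2 * p * r) := by ring
    _ ≤ 2 * p * q ^ 2 * r * (p ^ 2 + α * r ^ 2) := by gcongr
    _ ≤ _ := by nlinarith [sq_nonneg (p * (q ^ 2 - p * r)), sq_nonneg (q * r * (α * r - p))]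

theorem lambda_comparison_posSemidef {α p r : ℝ} (q : ℝ) (hα0 : 0 < α) (hα1 : α ≤ 1) (hp : 0 ≤ p)
    (hr : 0 ≤ r) :
    (!![α * (p ^ 2 + q ^ 2), -(p * q), -(α * (p * r));
        -(p * q), (q ^ 2 + r ^ 2) / α, -(r * q);
        -(α * (p * r)), -(r * q), α * r ^ 2 + p ^ 2 / α]).PosSemidef := by
  refine posSemidef_fin_three_of_minors (by positivity) (by positivity) (by positivity)
    ?_ ?_ ?_ ?_
  · rw [← sub_nonneg]
    have h : α * (p ^ 2 + q ^ 2) * ((q ^ 2 + r ^ 2) / α) - (-(p * q)) ^ 2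
        = p ^ 2 * r ^ 2 + q ^ 4 + q ^ 2 * r ^ 2 := by field_simp; ring
    rw [h]; positivity
  · rw [← sub_nonneg]
    have h : α * (p ^ 2 + q ^ 2) * (α * r ^ 2 + p ^ 2 / α) - (-(α * (p * r))) ^ 2
        = p ^ 4 + p ^ 2 * q ^ 2 + α ^ 2 * q ^ 2 * r ^ 2 := by field_simp; ring
    rw [h]; positivity
  · rw [← sub_nonneg]
    have h : (q ^ 2 + r ^ 2) / α * (α * r ^ 2 + p ^ 2 / α) - (-(r * q)) ^ 2
        = (p ^ 2 * q ^ 2 + p ^ 2 * r ^ 2 + α ^ 2 * r ^ 4) / α ^ 2 := by field_simp; ring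
    rw [h]; positivity
  · have hH := sub_nonneg.mpr (four_mul_sq_mul_sq_mul_sq_le q hα0.le hα1 hp hr)
    refine (div_nonneg hH hα0.le).trans_eq ?_
    rw [det_fin_three]
    simp only [of_apply, cons_val', cons_val_zero, cons_val_fin_one, cons_val_one, cons_val]
    field_simp
    ring

open Complex in
/-- For all `α ∈ (0,1]` and all `φ = (φ₁, φ₂, φ₃) ∈ ℂ³`, the `3×3` Hermitian matrix
`M` with entries `M₁₁ = α(|φ₁|²+|φ₂|²)`, `M₁₂ = φ₁ conj φ₂`, `M₁₃ = α φ₁ conj φ₃`,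
`M₂₂ = (|φ₂|²+|φ₃|²)/α`, `M₂₃ = φ₃ conj φ₂`, `M₃₃ = α|φ₃|² + |φ₁|²/α` (and `M` Hermitian)
is positive semi-definite. -/
theorem lambda_alpha_posSemidef (α : ℝ) (hα0 : 0 < α) (hα1 : α ≤ 1) (φ₁ φ₂ φ₃ : ℂ) :
    (Matrix.of
      !![(α : ℂ) * ((normSq φ₁ + normSq φ₂ : ℝ) : ℂ),
          φ₁ * starRingEnd ℂ φ₂,
          (α : ℂ) * (φ₁ * starRingEnd ℂ φ₃);
        φ₂ * starRingEnd ℂ φ₁,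
          ((normSq φ₂ + normSq φ₃ : ℝ) : ℂ) / (α : ℂ),
          φ₃ * starRingEnd ℂ φ₂;
        (α : ℂ) * (φ₃ * starRingEnd ℂ φ₁),
          φ₂ * starRingEnd ℂ φ₃,
          (α : ℂ) * ((normSq φ₃ : ℝ) : ℂ) + ((normSq φ₁ : ℝ) : ℂ) / (α : ℂ)]).PosSemidef := by
  rw [show ∀ M : Matrix (Fin 3) (Fin 3) ℂ, Matrix.of M = M from fun _ => rfl]
  refine .of_comparison ?_ (lambda_comparison_posSemidef ‖φ₂‖ hα0 hα1 (norm_nonneg φ₁)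
    (norm_nonneg φ₃)) ?_ ?_
  · ext i j
    fin_cases i <;> fin_cases j <;> simp [mul_comm, mul_left_comm, mul_assoc]
  · intro i
    fin_cases i <;> simp [normSq_eq_norm_sq]
  · intro i j hij
    fin_cases i <;> fin_cases j <;> simp [abs_of_pos hα0, mul_comm] at hij ⊢
end
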